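/- Let n ≥ 1, let f_0, …, f_n be n+1 polynomials in ℚ[x_0, …, x_{n-1}], let C be their Dixon cancellation matrix, and let d : {0,…,n-1} → ℕ satisfy d_k ≥ 1 and the degree of every f_j in x_k is at most d_k. Suppose θ ∈ ℚ[x_0,…,x_{n-1}, x̄_0,…,x̄_{n-1}] satisfies θ · ∏_{k=0}^{n-1}(x_k − x̄_k) = det C (θ is the Dixon polynomial). Then for every k ∈ {0,…,n-1}, the degree of θ in x_k is at most (k+1)·d_k − 1 and the degree of θ in x̄_k is at most (n−k)·d_k − 1. -/
import Mathlib


open MvPolynomial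

/-- The `i`-th Dixon substitution homomorphism `φ_i : ℚ[x] → ℚ[x, x̄]`,
sending `x_k ↦ x̄_k` for `k < i` and `x_k ↦ x_k` for `k ≥ i`.
Here `Sum.inl k` is the unbarred variable `x_k` and `Sum.inr k` is the barred `x̄_k`. -/
noncomputable def dixonPhi (n : ℕ) (i : Fin (n + 1)) :
    MvPolynomial (Fin n) ℚ →ₐ[ℚ] MvPolynomial (Fin n ⊕ Fin n) ℚ :=
  aeval (fun k : Fin n => if (k : ℕ) < (i : ℕ) then X (Sum.inr k) else X (Sum.inl k))

/-- The Dixon cancellation matrix of `f_0, …, f_n`, with entries `C i j = φ_i (f j)`. -/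
noncomputable def dixonCancellationMatrix (n : ℕ)
    (f : Fin (n + 1) → MvPolynomial (Fin n) ℚ) :
    Matrix (Fin (n + 1)) (Fin (n + 1)) (MvPolynomial (Fin n ⊕ Fin n) ℚ) :=
  fun i j => dixonPhi n i (f j)


lemma degreeOf_eq_zero_of_notMem_vars {σ R : Type*} [CommSemiring R]
    {p : MvPolynomial σ R} {i : σ} (h : i ∉ p.vars) : degreeOf i p = 0 := by
  classical
  rw [degreeOf_def]
  rw [vars_def, Multiset.mem_toFinset] at h
  exact Multiset.count_eq_zero_of_notMem h

lemma aux_deg0_mul (m : ℕ) (p q : MvPolynomial (Fin (m+1)) ℚ) (hp : p ≠ 0) (hq : q ≠ 0) :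
    degreeOf 0 (p * q) = degreeOf 0 p + degreeOf 0 q := by
  have hp' : finSuccEquiv ℚ m p ≠ 0 := by simpa using hp
  have hq' : finSuccEquiv ℚ m q ≠ 0 := by simpa using hq
  rw [← natDegree_finSuccEquiv, ← natDegree_finSuccEquiv, ← natDegree_finSuccEquiv, map_mul,
    Polynomial.natDegree_mul hp' hq']

lemma degreeOf_mul_eq' {σ : Type*} [Fintype σ] [DecidableEq σ] (i : σ)
    (p q : MvPolynomial σ ℚ) (hp : p ≠ 0) (hq : q ≠ 0) :
    degreeOf i (p * q) = degreeOf i p + degreeOf i q := by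
  have hcard : 0 < Fintype.card σ := Fintype.card_pos_iff.mpr ⟨i⟩
  obtain ⟨m, hm⟩ : ∃ m, Fintype.card σ = m + 1 := ⟨_, (Nat.succ_pred_eq_of_pos hcard).symm⟩
  set e1 : σ ≃ Fin (m+1) := (Fintype.equivFin σ).trans (finCongr hm) with he1
  set e : σ ≃ Fin (m+1) := e1.trans (Equiv.swap (e1 i) 0) with he
  have hei : e i = 0 := by simp [he]
  have key : ∀ r : MvPolynomial σ ℚ, degreeOf i r = degreeOf 0 (rename e r) := fun r => by
    rw [← hei]; exact (degreeOf_rename_of_injective e.injective i).symm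
  have hne : ∀ r : MvPolynomial σ ℚ, r ≠ 0 → rename (e : σ → Fin (m+1)) r ≠ 0 := by
    intro r hr h0
    exact hr (rename_injective _ e.injective (by rw [h0, map_zero]))
  rw [key, key, key, map_mul, aux_deg0_mul _ _ _ (hne p hp) (hne q hq)]

lemma degreeOf_prod_eq {σ ι : Type*} [Fintype σ] [DecidableEq σ] (i : σ) (s : Finset ι)
    (F : ι → MvPolynomial σ ℚ) (h : ∀ j ∈ s, F j ≠ 0) :
    degreeOf i (∏ j ∈ s, F j) = ∑ j ∈ s, degreeOf i (F j) := by
  induction s using Finset.cons_induction with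
  | empty => simpa using degreeOf_C (1:ℚ) i
  | cons a s ha ih =>
    rw [Finset.prod_cons, Finset.sum_cons,
      degreeOf_mul_eq' i _ _ (h a (Finset.mem_cons_self a s))
        (Finset.prod_ne_zero_iff.mpr fun j hj => h j (Finset.mem_cons_of_mem hj)),
      ih fun j hj => h j (Finset.mem_cons_of_mem hj)]

lemma X_sub_X_ne_zero {σ : Type*} [DecidableEq σ] {a b : σ} (hab : a ≠ b) :
    (X a - X b : MvPolynomial σ ℚ) ≠ 0 := by
  intro h
  have := congrArg (coeff (Finsupp.single a 1)) h
  simp [coeff_X', Finsupp.single_eq_single_iff, hab, hab.symm] at this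

lemma degreeOf_X_sub_X {σ : Type*} [DecidableEq σ] {a b : σ} (hab : a ≠ b) (v : σ) :
    degreeOf v (X a - X b : MvPolynomial σ ℚ) = if v = a ∨ v = b then 1 else 0 := by
  have h1 : degreeOf v (X a : MvPolynomial σ ℚ) ≤ 1 := by
    rw [degreeOf_X]; split <;> omega
  have h2 : degreeOf v (X b : MvPolynomial σ ℚ) ≤ 1 := by
    rw [degreeOf_X]; split <;> omega
  split_ifs with hv
  · refine le_antisymm ((degreeOf_sub_le v _ _).trans (max_le h1 h2)) ?_
    rcases hv with rfl | rfl
    · have hm : (Finsupp.single v 1 : σ →₀ ℕ) ∈ (X v - X b : MvPolynomial σ ℚ).support := by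
        rw [mem_support_iff]
        simp [coeff_X', Finsupp.single_eq_single_iff, hab, hab.symm]
      simpa using monomial_le_degreeOf v hm
    · have hm : (Finsupp.single v 1 : σ →₀ ℕ) ∈ (X a - X v : MvPolynomial σ ℚ).support := by
        rw [mem_support_iff]
        simp [coeff_X', Finsupp.single_eq_single_iff, hab, hab.symm]
      simpa using monomial_le_degreeOf v hm
  · push_neg at hv
    refine Nat.le_zero.mp ((degreeOf_sub_le v _ _).trans ?_)
    rw [degreeOf_X, degreeOf_X, if_neg hv.1, if_neg hv.2]
    simp

lemma degreeOf_det_le {m : ℕ} {τ : Type*} (v : τ)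
    (M : Matrix (Fin m) (Fin m) (MvPolynomial τ ℚ)) (b : Fin m → ℕ)
    (h : ∀ i j, degreeOf v (M i j) ≤ b i) :
    degreeOf v M.det ≤ ∑ i, b i := by
  rw [Matrix.det_apply]
  refine (degreeOf_sum_le _ _ _).trans (Finset.sup_le fun σ _ => ?_)
  have hs : degreeOf v (Equiv.Perm.sign σ • ∏ i, M (σ i) i)
      = degreeOf v (∏ i, M (σ i) i) := by
    rcases Int.units_eq_one_or (Equiv.Perm.sign σ) with h1 | h1 <;>
      rw [h1] <;> simp [Units.smul_def, degreeOf_neg]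
  rw [hs]
  refine (degreeOf_prod_le _ _ _).trans ?_
  calc ∑ i, degreeOf v (M (σ i) i) ≤ ∑ i, b (σ i) := Finset.sum_le_sum fun i _ => h _ _
    _ = ∑ i, b i := Equiv.sum_comp σ b

def dixonG (n : ℕ) (i : Fin (n + 1)) : Fin n → Fin n ⊕ Fin n :=
  fun k => if (k : ℕ) < (i : ℕ) then Sum.inr k else Sum.inl k

lemma dixonG_injective (n : ℕ) (i : Fin (n + 1)) : Function.Injective (dixonG n i) := by
  intro a b hab
  unfold dixonG at hab
  split_ifs at hab <;> simp_all


lemma dixonPhi_eq_rename (n : ℕ) (i : Fin (n + 1)) :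
    dixonPhi n i = rename (dixonG n i) := by
  apply MvPolynomial.algHom_ext
  intro k
  simp only [dixonPhi, aeval_X, rename_X, dixonG]
  split_ifs <;> rfl

lemma degreeOf_inl_dixonPhi {n : ℕ} (i : Fin (n + 1)) (p : MvPolynomial (Fin n) ℚ) (k : Fin n)
    {D : ℕ} (hp : degreeOf k p ≤ D) :
    degreeOf (Sum.inl k) (dixonPhi n i p) ≤ if (i : ℕ) ≤ (k : ℕ) then D else 0 := by
  rw [dixonPhi_eq_rename]
  split_ifs with h
  · have hgk : dixonG n i k = Sum.inl k := by simp [dixonG, Nat.not_lt.mpr h]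
    calc degreeOf (Sum.inl k) (rename (dixonG n i) p)
        = degreeOf k p := by
          rw [← hgk, degreeOf_rename_of_injective (dixonG_injective n i)]
      _ ≤ D := hp
  · refine le_of_eq (degreeOf_eq_zero_of_notMem_vars ?_)
    intro hmem
    obtain ⟨k', -, hk'⟩ := mem_vars_rename _ _ hmem
    unfold dixonG at hk'
    split_ifs at hk' with h' <;> simp_all <;> omega

lemma degreeOf_inr_dixonPhi {n : ℕ} (i : Fin (n + 1)) (p : MvPolynomial (Fin n) ℚ) (k : Fin n)
    {D : ℕ} (hp : degreeOf k p ≤ D) :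
    degreeOf (Sum.inr k) (dixonPhi n i p) ≤ if (k : ℕ) < (i : ℕ) then D else 0 := by
  rw [dixonPhi_eq_rename]
  split_ifs with h
  · have hgk : dixonG n i k = Sum.inr k := by simp [dixonG, h]
    calc degreeOf (Sum.inr k) (rename (dixonG n i) p)
        = degreeOf k p := by
          rw [← hgk, degreeOf_rename_of_injective (dixonG_injective n i)]
      _ ≤ D := hp
  · refine le_of_eq (degreeOf_eq_zero_of_notMem_vars ?_)
    intro hmem
    obtain ⟨k', -, hk'⟩ := mem_vars_rename _ _ hmem
    unfold dixonG at hk'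
    split_ifs at hk' with h' <;> simp_all <;> omega

lemma count_inl {n : ℕ} (k : Fin n) (D : ℕ) :
    ∑ i : Fin (n + 1), (if (i : ℕ) ≤ (k : ℕ) then D else 0) = ((k : ℕ) + 1) * D := by
  have hk := k.isLt
  rw [Fin.sum_univ_eq_sum_range (fun i => if i ≤ (k : ℕ) then D else 0) (n + 1),
    Finset.sum_ite, Finset.sum_const, Finset.sum_const_zero, add_zero, smul_eq_mul]
  congr 1
  have : (Finset.range (n + 1)).filter (fun i => i ≤ (k : ℕ)) = Finset.range ((k : ℕ) + 1) := by
    ext a; simp only [Finset.mem_filter, Finset.mem_range]; omega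
  rw [this, Finset.card_range]

lemma count_inr {n : ℕ} (k : Fin n) (D : ℕ) :
    ∑ i : Fin (n + 1), (if (k : ℕ) < (i : ℕ) then D else 0) = (n - (k : ℕ)) * D := by
  have hk := k.isLt
  rw [Fin.sum_univ_eq_sum_range (fun i => if (k : ℕ) < i then D else 0) (n + 1),
    Finset.sum_ite, Finset.sum_const, Finset.sum_const_zero, add_zero, smul_eq_mul]
  congr 1
  have : (Finset.range (n + 1)).filter (fun i => (k : ℕ) < i) = Finset.Ico ((k : ℕ) + 1) (n + 1) := by
    ext a; simp only [Finset.mem_filter, Finset.mem_range, Finset.mem_Ico]; omega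
  rw [this, Nat.card_Ico]
  omega

/-- Degree bounds for the Dixon polynomial `θ` (defined by
`θ · ∏ (x_k − x̄_k) = det C`): in `x_k` at most `(k+1)·d_k − 1`,
and in `x̄_k` at most `(n−k)·d_k − 1`. -/
theorem dixon_poly_degreeOf_le (n : ℕ) (hn : 1 ≤ n)
    (f : Fin (n + 1) → MvPolynomial (Fin n) ℚ) (d : Fin n → ℕ)
    (hd1 : ∀ k : Fin n, 1 ≤ d k)
    (hd : ∀ j : Fin (n + 1), ∀ k : Fin n, degreeOf k (f j) ≤ d k)
    (θ : MvPolynomial (Fin n ⊕ Fin n) ℚ)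
    (hθ : θ * ∏ k : Fin n, (X (Sum.inl k) - X (Sum.inr k)) =
        (dixonCancellationMatrix n f).det) :
    ∀ k : Fin n,
      degreeOf (Sum.inl k) θ ≤ ((k : ℕ) + 1) * d k - 1 ∧
      degreeOf (Sum.inr k) θ ≤ (n - (k : ℕ)) * d k - 1 := by
  classical
  intro k
  have hk := k.isLt
  have hdk := hd1 k
  have hfac : ∀ k' : Fin n,
      (X (Sum.inl k') - X (Sum.inr k') : MvPolynomial (Fin n ⊕ Fin n) ℚ) ≠ 0 :=
    fun k' => X_sub_X_ne_zero (by simp)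
  have hPne : (∏ k' : Fin n,
      (X (Sum.inl k') - X (Sum.inr k') : MvPolynomial (Fin n ⊕ Fin n) ℚ)) ≠ 0 :=
    Finset.prod_ne_zero_iff.mpr fun j _ => hfac j
  by_cases hθ0 : θ = 0
  · constructor <;> simp [hθ0, degreeOf_zero]
  have key : ∀ v : Fin n ⊕ Fin n,
      degreeOf v (θ * ∏ k' : Fin n, (X (Sum.inl k') - X (Sum.inr k'))) =
      degreeOf v θ + ∑ k' : Fin n,
        degreeOf v (X (Sum.inl k') - X (Sum.inr k') : MvPolynomial (Fin n ⊕ Fin n) ℚ) := by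
    intro v
    rw [degreeOf_mul_eq' v _ _ hθ0 hPne, degreeOf_prod_eq v _ _ (fun j _ => hfac j)]
  constructor
  · have hdet : degreeOf (Sum.inl k) (dixonCancellationMatrix n f).det ≤ ((k : ℕ) + 1) * d k := by
      refine (degreeOf_det_le _ _ (fun i => if (i : ℕ) ≤ (k : ℕ) then d k else 0) ?_).trans_eq
        (count_inl k (d k))
      intro i j
      exact degreeOf_inl_dixonPhi i (f j) k (hd j k)
    have hsum : ∑ k' : Fin n,
        degreeOf (Sum.inl k) (X (Sum.inl k') - X (Sum.inr k') : MvPolynomial (Fin n ⊕ Fin n) ℚ)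
        = 1 := by
      rw [Finset.sum_congr rfl (fun k' _ => degreeOf_X_sub_X (by simp) (Sum.inl k))]
      simp
    have hthis := key (Sum.inl k)
    rw [hθ, hsum] at hthis
    have : degreeOf (Sum.inl k) θ + 1 ≤ ((k : ℕ) + 1) * d k := hthis ▸ hdet
    exact Nat.le_pred_of_lt this
  · have hdet : degreeOf (Sum.inr k) (dixonCancellationMatrix n f).det ≤ (n - (k : ℕ)) * d k := by
      refine (degreeOf_det_le _ _ (fun i => if (k : ℕ) < (i : ℕ) then d k else 0) ?_).trans_eq
        (count_inr k (d k))
      intro i j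
      exact degreeOf_inr_dixonPhi i (f j) k (hd j k)
    have hsum : ∑ k' : Fin n,
        degreeOf (Sum.inr k) (X (Sum.inl k') - X (Sum.inr k') : MvPolynomial (Fin n ⊕ Fin n) ℚ)
        = 1 := by
      rw [Finset.sum_congr rfl (fun k' _ => degreeOf_X_sub_X (by simp) (Sum.inr k))]
      simp
    have hthis := key (Sum.inr k)
    rw [hθ, hsum] at hthis
    have : degreeOf (Sum.inr k) θ + 1 ≤ (n - (k : ℕ)) * d k := hthis ▸ hdet
    exact Nat.le_pred_of_lt this
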